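/- The explicit operation f : A³ → A on A = A₁ ⊎ A₂ ⊎ {c₁,c₂} defined by: f(x,y,z) = fᵢ(x,y,z) if x,y,z ∈ Aᵢ; f(x,y,z) = cᵢ if x,y,z ∈ Aᵢ ∪ {cᵢ} and exactly one or all three inputs equal cᵢ; otherwise f(x,y,z) is the leftmost input not occurring exactly twice among the inputs — is a Maltsev operation (f(x,x,y) = f(y,x,x) = y for all x,y ∈ A), provided f₁, f₂ are Maltsev operations on A₁, A₂. -/
import Mathlib


/-- The universe `A₁ ⊎ A₂ ⊎ {c₁,c₂}`. -/
inductive OrU (α₁ α₂ : Type*) where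
  | a1 : α₁ → OrU α₁ α₂
  | a2 : α₂ → OrU α₁ α₂
  | c1 : OrU α₁ α₂
  | c2 : OrU α₁ α₂

noncomputable section
open Classical

/-- The number of occurrences of `a` among the three inputs `x, y, z`. -/
def cnt3 {A : Type*} (x y z a : A) : ℕ :=
  (if a = x then 1 else 0) + (if a = y then 1 else 0) + (if a = z then 1 else 0)

/-- The leftmost input among `x, y, z` not occurring exactly twice among the inputs. -/
def leftmost {A : Type*} (x y z : A) : A :=
  if cnt3 x y z x ≠ 2 then x else if cnt3 x y z y ≠ 2 then y else z

/-- Membership in `A₁ ∪ {c₁}`. -/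
def inA1c {α₁ α₂ : Type*} (u : OrU α₁ α₂) : Prop :=
  u = OrU.c1 ∨ ∃ a, u = OrU.a1 a

/-- Membership in `A₂ ∪ {c₂}`. -/
def inA2c {α₁ α₂ : Type*} (u : OrU α₁ α₂) : Prop :=
  u = OrU.c2 ∨ ∃ a, u = OrU.a2 a

/-- The explicit operation of the tractable or-construction:
`f(x,y,z) = fᵢ(x,y,z)` if `x,y,z ∈ Aᵢ`; `f(x,y,z) = cᵢ` if `x,y,z ∈ Aᵢ ∪ {cᵢ}` and
exactly one or all three inputs equal `cᵢ`; otherwise the leftmost input not occurring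
exactly twice. -/
def orMal {α₁ α₂ : Type*} (f₁ : α₁ → α₁ → α₁ → α₁) (f₂ : α₂ → α₂ → α₂ → α₂) :
    OrU α₁ α₂ → OrU α₁ α₂ → OrU α₁ α₂ → OrU α₁ α₂
  | OrU.a1 a, OrU.a1 b, OrU.a1 c => OrU.a1 (f₁ a b c)
  | OrU.a2 a, OrU.a2 b, OrU.a2 c => OrU.a2 (f₂ a b c)
  | x, y, z =>
      if (inA1c x ∧ inA1c y ∧ inA1c z) ∧
          (cnt3 x y z OrU.c1 = 1 ∨ cnt3 x y z OrU.c1 = 3) then OrU.c1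
      else if (inA2c x ∧ inA2c y ∧ inA2c z) ∧
          (cnt3 x y z OrU.c2 = 1 ∨ cnt3 x y z OrU.c2 = 3) then OrU.c2
      else leftmost x y z

/-- Provided `f₁` and `f₂` are Maltsev operations on `A₁`, `A₂`, the explicit
operation above is a Maltsev operation on `A₁ ⊎ A₂ ⊎ {c₁,c₂}`. -/
theorem orMal_isMaltsev {α₁ α₂ : Type*}
    (f₁ : α₁ → α₁ → α₁ → α₁) (f₂ : α₂ → α₂ → α₂ → α₂)
    (h₁ : ∀ a b : α₁, f₁ a a b = b ∧ f₁ b a a = b)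
    (h₂ : ∀ a b : α₂, f₂ a a b = b ∧ f₂ b a a = b) :
    ∀ x y : OrU α₁ α₂, orMal f₁ f₂ x x y = y ∧ orMal f₁ f₂ y x x = y := by
  intro x y
  cases x <;> cases y <;>
    simp_all [orMal, cnt3, leftmost, inA1c, inA2c, h₁, h₂]

end
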